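/- Let A be a residuated lattice and 𝔭 a proper pure filter. Then 𝔭 is purely-prime if and only if for all pure filters F₁, F₂: F₁ ∩ F₂ ⊆ 𝔭 implies F₁ ⊆ 𝔭 or F₂ ⊆ 𝔭. -/
import Mathlib


structure ResiduatedLattice (A : Type*) [Lattice A] [BoundedOrder A] where
  mul : A → A → A
  himp : A → A → A
  mul_comm : ∀ x y : A, mul x y = mul y x
  mul_assoc : ∀ x y z : A, mul (mul x y) z = mul x (mul y z)
  mul_top : ∀ x : A, mul x ⊤ = x
  adj : ∀ x y z : A, mul x z ≤ y ↔ z ≤ himp x y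

namespace ResiduatedLattice

variable {A : Type*} [Lattice A] [BoundedOrder A]

/-- ¬a := a → 0 -/
def neg (R : ResiduatedLattice A) (a : A) : A := R.himp a ⊥

/-- A filter: nonempty, closed under ⊙, and closed under joining with arbitrary elements. -/
def IsFilter (R : ResiduatedLattice A) (F : Set A) : Prop :=
  F.Nonempty ∧ (∀ x ∈ F, ∀ y ∈ F, R.mul x y ∈ F) ∧ (∀ x ∈ F, ∀ y : A, x ⊔ y ∈ F)

/-- Join of two filters: the filter generated by their union. -/
def FJoin (R : ResiduatedLattice A) (F G : Set A) : Set A :=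
  {c | ∃ f ∈ F, ∃ g ∈ G, R.mul f g ≤ c}

/-- Coannulet a⊥ = {x | x ∨ a = 1}. -/
def perp (R : ResiduatedLattice A) (a : A) : Set A := {x | x ⊔ a = ⊤}

/-- Powers aⁿ with a⁰ = 1 = ⊤. -/
def pow (R : ResiduatedLattice A) (a : A) : ℕ → A
  | 0 => ⊤
  | n + 1 => R.mul a (pow R a n)

/-- Filter generated by a filter F together with an element x. -/
def FGen (R : ResiduatedLattice A) (F : Set A) (x : A) : Set A :=
  {a | ∃ f ∈ F, ∃ n : ℕ, R.mul f (R.pow x n) ≤ a}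

/-- Principal filter generated by a. -/
def principal (R : ResiduatedLattice A) (a : A) : Set A :=
  {b | ∃ n : ℕ, R.pow a n ≤ b}

/-- The sink σ(F) = {a | a⊥ ⋎ F = A}. -/
def sink (R : ResiduatedLattice A) (F : Set A) : Set A :=
  {a | R.FJoin (R.perp a) F = Set.univ}

/-- Purity condition: a⊥ ⋎ F = A for every a ∈ F. -/
def PureOn (R : ResiduatedLattice A) (F : Set A) : Prop :=
  ∀ a ∈ F, R.FJoin (R.perp a) F = Set.univ

/-- Prime filter. -/
def IsPrime (R : ResiduatedLattice A) (F : Set A) : Prop :=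
  R.IsFilter F ∧ F ≠ Set.univ ∧ ∀ x y : A, x ⊔ y ∈ F → x ∈ F ∨ y ∈ F

/-- Minimal prime filter. -/
def IsMinimalPrime (R : ResiduatedLattice A) (F : Set A) : Prop :=
  R.IsPrime F ∧ ∀ G : Set A, R.IsPrime G → G ⊆ F → G = F

/-- Filter generated by an arbitrary set X. -/
def gen (R : ResiduatedLattice A) (X : Set A) : Set A :=
  {a | ∃ l : List A, (∀ x ∈ l, x ∈ X) ∧ l.foldr R.mul ⊤ ≤ a}

/-- Purely-prime filter: proper pure filter p such that F₁ ∩ F₂ = p for pure filters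
implies F₁ = p or F₂ = p. -/
def PurelyPrime (R : ResiduatedLattice A) (p : Set A) : Prop :=
  R.IsFilter p ∧ R.PureOn p ∧ p ≠ Set.univ ∧
    ∀ F₁ F₂ : Set A, R.IsFilter F₁ → R.PureOn F₁ → R.IsFilter F₂ → R.PureOn F₂ →
      F₁ ∩ F₂ = p → F₁ = p ∨ F₂ = p

/-- (H : a) = {x | x ∨ a ∈ H}. -/
def res (R : ResiduatedLattice A) (H : Set A) (a : A) : Set A :=
  {x | x ⊔ a ∈ H}

end ResiduatedLattice

open ResiduatedLattice

variable {A : Type*} [Lattice A] [BoundedOrder A]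

namespace StmtAux

variable (R : ResiduatedLattice A)

lemma mul_le_right' {x z z' : A} (h : z ≤ z') : R.mul x z ≤ R.mul x z' := by
  rw [R.adj]
  exact le_trans h ((R.adj x (R.mul x z') z').mp le_rfl)

lemma mul_mono {a b c d : A} (h1 : a ≤ b) (h2 : c ≤ d) : R.mul a c ≤ R.mul b d := by
  refine le_trans (mul_le_right' R h2) ?_
  rw [R.mul_comm a d, R.mul_comm b d]
  exact mul_le_right' R h1

lemma mul_le_left (a b : A) : R.mul a b ≤ a := by
  calc R.mul a b ≤ R.mul a ⊤ := mul_le_right' R le_top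
  _ = a := R.mul_top a

lemma mul_le_right (a b : A) : R.mul a b ≤ b := by
  rw [R.mul_comm]; exact mul_le_left R b a

lemma sup_mul_le {u v w y : A} (h1 : R.mul u w ≤ y) (h2 : R.mul v w ≤ y) :
    R.mul (u ⊔ v) w ≤ y := by
  rw [R.mul_comm, R.adj]
  refine sup_le ((R.adj w y u).mp ?_) ((R.adj w y v).mp ?_)
  · rw [R.mul_comm]; exact h1
  · rw [R.mul_comm]; exact h2

lemma top_mem {F : Set A} (hF : R.IsFilter F) : ⊤ ∈ F := by
  obtain ⟨x, hx⟩ := hF.1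
  have := hF.2.2 x hx ⊤
  rwa [sup_top_eq] at this

lemma mem_of_le {F : Set A} (hF : R.IsFilter F) {x y : A} (hx : x ∈ F) (h : x ≤ y) : y ∈ F := by
  have := hF.2.2 x hx y
  rwa [sup_eq_right.mpr h] at this

lemma subset_FJoin_left {F G : Set A} (hG : R.IsFilter G) : F ⊆ R.FJoin F G := by
  intro f hf
  exact ⟨f, hf, ⊤, top_mem R hG, by rw [R.mul_top]⟩

lemma subset_FJoin_right {F G : Set A} (hF : R.IsFilter F) : G ⊆ R.FJoin F G := by
  intro g hg
  exact ⟨⊤, top_mem R hF, g, hg, by rw [R.mul_comm, R.mul_top]⟩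

lemma mul_mul_mul_comm' (a b c d : A) :
    R.mul (R.mul a b) (R.mul c d) = R.mul (R.mul a c) (R.mul b d) := by
  rw [R.mul_assoc a b (R.mul c d), ← R.mul_assoc b c d, R.mul_comm b c, R.mul_assoc c b d,
    ← R.mul_assoc a c (R.mul b d)]

lemma FJoin_filter {F G : Set A} (hF : R.IsFilter F) (hG : R.IsFilter G) :
    R.IsFilter (R.FJoin F G) := by
  refine ⟨⟨⊤, ⊤, top_mem R hF, ⊤, top_mem R hG, le_top⟩, ?_, ?_⟩
  · rintro x ⟨f, hf, g, hg, hx⟩ y ⟨f', hf', g', hg', hy⟩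
    refine ⟨R.mul f f', hF.2.1 f hf f' hf', R.mul g g', hG.2.1 g hg g' hg', ?_⟩
    rw [mul_mul_mul_comm' R]
    exact mul_mono R hx hy
  · rintro x ⟨f, hf, g, hg, hx⟩ y
    exact ⟨f, hf, g, hg, le_trans hx le_sup_left⟩

lemma mem_perp_mul {f q x : A} (hf : x ∈ R.perp f) (hq : x ∈ R.perp q) :
    x ∈ R.perp (R.mul f q) := by
  have hle : R.mul (x ⊔ f) (x ⊔ q) ≤ x ⊔ R.mul f q := by
    refine sup_mul_le R (le_trans (mul_le_left R x (x ⊔ q)) le_sup_left) ?_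
    rw [R.mul_comm]
    exact sup_mul_le R (le_trans (mul_le_left R x f) le_sup_left)
      (le_trans (le_of_eq (R.mul_comm q f)) le_sup_right)
  have : (⊤ : A) ≤ x ⊔ R.mul f q := by
    calc (⊤ : A) = R.mul (x ⊔ f) (x ⊔ q) := by rw [hf, hq, R.mul_top]
    _ ≤ x ⊔ R.mul f q := hle
  exact le_antisymm le_top this

lemma FJoin_pure {F p : Set A} (hFp : R.PureOn F) (hpp : R.PureOn p)
    (hF : R.IsFilter F) (hpf : R.IsFilter p) : R.PureOn (R.FJoin F p) := by
  rintro a ⟨f, hf, q, hq, hfa⟩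
  apply Set.eq_univ_of_forall
  intro c
  -- purity of p at q, applied to c
  have hc : c ∈ R.FJoin (R.perp q) p := by rw [hpp q hq]; trivial
  obtain ⟨u₂, hu₂, w, hw, hu₂w⟩ := hc
  -- purity of F at f, applied to u₂
  have hu : u₂ ∈ R.FJoin (R.perp f) F := by rw [hFp f hf]; trivial
  obtain ⟨u₁, hu₁, v₁, hv₁, hu₁v₁⟩ := hu
  have hperpf : u₁ ⊔ u₂ ∈ R.perp f := by
    have : u₁ ⊔ u₂ ⊔ f = ⊤ := by
      refine le_antisymm le_top ?_
      calc (⊤ : A) = u₁ ⊔ f := hu₁.symm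
      _ ≤ u₁ ⊔ u₂ ⊔ f := sup_le_sup_right le_sup_left f
    exact this
  have hperpq : u₁ ⊔ u₂ ∈ R.perp q := by
    have : u₁ ⊔ u₂ ⊔ q = ⊤ := by
      refine le_antisymm le_top ?_
      calc (⊤ : A) = u₂ ⊔ q := hu₂.symm
      _ ≤ u₁ ⊔ u₂ ⊔ q := sup_le_sup_right le_sup_right q
    exact this
  have hperpa : u₁ ⊔ u₂ ∈ R.perp a := by
    have h1 : u₁ ⊔ u₂ ∈ R.perp (R.mul f q) := mem_perp_mul R hperpf hperpq
    have : (⊤ : A) ≤ (u₁ ⊔ u₂) ⊔ a :=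
      le_trans (le_of_eq h1.symm) (sup_le_sup_left hfa _)
    exact le_antisymm le_top this
  refine ⟨u₁ ⊔ u₂, hperpa, R.mul v₁ w, ⟨v₁, hv₁, w, hw, le_rfl⟩, ?_⟩
  refine sup_mul_le R ?_ ?_
  · rw [← R.mul_assoc]
    exact le_trans (mul_mono R hu₁v₁ le_rfl) hu₂w
  · exact le_trans (mul_le_right' R (mul_le_right R v₁ w)) hu₂w

end StmtAux

open StmtAux in
theorem stmt15 (R : ResiduatedLattice A) (p : Set A)
    (hfil : R.IsFilter p) (hpure : R.PureOn p) (hproper : p ≠ Set.univ) :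
    (∀ F₁ F₂ : Set A, R.IsFilter F₁ → R.PureOn F₁ → R.IsFilter F₂ → R.PureOn F₂ →
        F₁ ∩ F₂ = p → F₁ = p ∨ F₂ = p) ↔
    (∀ F₁ F₂ : Set A, R.IsFilter F₁ → R.PureOn F₁ → R.IsFilter F₂ → R.PureOn F₂ →
        F₁ ∩ F₂ ⊆ p → F₁ ⊆ p ∨ F₂ ⊆ p) := by
  constructor
  · intro h F₁ F₂ hF₁ hpF₁ hF₂ hpF₂ hsub
    have hG₁ := FJoin_filter R hF₁ hfil
    have hG₂ := FJoin_filter R hF₂ hfil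
    have heq : R.FJoin F₁ p ∩ R.FJoin F₂ p = p := by
      apply le_antisymm
      · rintro x ⟨⟨f₁, hf₁, q₁, hq₁, h1⟩, ⟨f₂, hf₂, q₂, hq₂, h2⟩⟩
        have hfsup : f₁ ⊔ f₂ ∈ p :=
          hsub ⟨hF₁.2.2 f₁ hf₁ f₂, by rw [sup_comm]; exact hF₂.2.2 f₂ hf₂ f₁⟩
        have hqq : R.mul q₁ q₂ ∈ p := hfil.2.1 q₁ hq₁ q₂ hq₂
        refine mem_of_le R hfil (hfil.2.1 _ hfsup _ hqq) ?_
        refine sup_mul_le R ?_ ?_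
        · exact le_trans (mul_le_right' R (mul_le_left R q₁ q₂)) h1
        · exact le_trans (mul_le_right' R (mul_le_right R q₁ q₂)) h2
      · exact fun x hx => ⟨subset_FJoin_right R hF₁ hx, subset_FJoin_right R hF₂ hx⟩
    rcases h (R.FJoin F₁ p) (R.FJoin F₂ p) hG₁ (FJoin_pure R hpF₁ hpure hF₁ hfil)
        hG₂ (FJoin_pure R hpF₂ hpure hF₂ hfil) heq with h1 | h2
    · exact Or.inl (h1 ▸ subset_FJoin_left R hfil)
    · exact Or.inr (h2 ▸ subset_FJoin_left R hfil)
  · intro h F₁ F₂ hF₁ hpF₁ hF₂ hpF₂ heq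
    rcases h F₁ F₂ hF₁ hpF₁ hF₂ hpF₂ heq.subset with h1 | h2
    · exact Or.inl (le_antisymm h1 (heq ▸ Set.inter_subset_left))
    · exact Or.inr (le_antisymm h2 (heq ▸ Set.inter_subset_right))
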